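/- arXiv:1311.2613 — 4 statements merged into one kernel-verified Lean document; each statement's English description precedes it below -/
import Mathlib

section
/- Kernel inequality: For every real number w > 0 with w ≠ 1, one has −w·log|(w+1)/(w−1)| − (1/w)·log|(w+1)/(w−1)| + 2 ≤ 0; equivalently, (w + 1/w)·log|(w+1)/(w−1)| ≥ 2. -/
/-! The logarithm `log |(w + 1) / (w - 1)|` is invariant under `w ↦ 1 / w`, and for `0 ≤ t < 1`
it equals `log ((1 + t) / (1 - t)) = 2 (t + t³/3 + ⋯) ≥ 2t`. Applied to `t = min w (1 / w)` this gives
`(w + 1 / w) · log |(w + 1) / (w - 1)| ≥ 2 (1 + t²) ≥ 2`. -/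

open Real

lemma log_abs_add_one_div_sub_one_inv {w : ℝ} (hw : w ≠ 0) :
    log |(w⁻¹ + 1) / (w⁻¹ - 1)| = log |(w + 1) / (w - 1)| := by
  have : (w⁻¹ + 1) / (w⁻¹ - 1) = -((w + 1) / (w - 1)) := by
    rw [← mul_div_mul_left _ _ hw, mul_add, mul_sub, mul_inv_cancel₀ hw, mul_one,
      ← neg_sub w, div_neg, add_comm]
  rw [this, abs_neg]

lemma two_mul_le_log_abs_add_one_div_sub_one {w : ℝ} (h₀ : 0 ≤ w) (h₁ : w < 1) :
    2 * w ≤ log |(w + 1) / (w - 1)| := by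
  have h : w ≤ 1 / 2 * log ((1 + w) / (1 - w)) := by
    simpa using sum_range_le_log_div h₀ h₁ 1
  have habs : |(w + 1) / (w - 1)| = (1 + w) / (1 - w) := by
    rw [abs_div, abs_of_pos (by linarith), abs_of_neg (by linarith), neg_sub, add_comm]
  rw [habs]
  linarith

/-- **Kernel inequality.**
For every real `w > 0` with `w ≠ 1`:
`−w log|(w+1)/(w−1)| − (1/w) log|(w+1)/(w−1)| + 2 ≤ 0`; equivalently
`(w + 1/w) log|(w+1)/(w−1)| ≥ 2`. -/
theorem kernel_inequality (w : ℝ) (hw : 0 < w) (hw1 : w ≠ 1) :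
    (-(w * Real.log |(w + 1) / (w - 1)|)
        - (1 / w) * Real.log |(w + 1) / (w - 1)| + 2 ≤ 0) ∧
    (2 ≤ (w + 1 / w) * Real.log |(w + 1) / (w - 1)|) := by
  suffices key : 2 ≤ (w + 1 / w) * log |(w + 1) / (w - 1)| from ⟨by linarith, key⟩
  rcases hw1.lt_or_gt with hlt | hgt
  · have hL := two_mul_le_log_abs_add_one_div_sub_one hw.le hlt
    calc (2 : ℝ) ≤ (w + 1 / w) * (2 * w) := by field_simp; nlinarith
      _ ≤ _ := by gcongr
  · have hL := two_mul_le_log_abs_add_one_div_sub_one (inv_nonneg.2 hw.le)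
      (inv_lt_one_of_one_lt₀ hgt)
    rw [log_abs_add_one_div_sub_one_inv hw.ne'] at hL
    calc (2 : ℝ) ≤ (w + 1 / w) * (2 * w⁻¹) := by field_simp; nlinarith
      _ ≤ _ := by gcongr
end

section
/- Representation and negativity of the velocity field: Let L > 0, μ = π/L, and let ω be a continuous L-periodic function that is odd about z = 0, i.e., ω(L−y) = −ω(y) for all y ∈ [0,L]. Define v(z) = (1/π) ∫₀^L ω(y) log|sin(μ(z−y))| dy. Then for every z ∈ (0, L/2), v(z) = (1/π) ∫₀^{L/2} ω(y) log|(tan(μz) − tan(μy))/(tan(μz) + tan(μy))| dy; moreover, if in addition ω > 0 on (0, L/2), then v(z) < 0 for every z ∈ (0, L/2). -/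
open MeasureTheory Set Real

/-!
Reflecting the half `[L/2, L]` by `y ↦ L - y` and using `ω (L - y) = -ω y` together with the
`L`-periodicity of `x ↦ log |sin (μ x)|` folds `v` into an integral over `[0, L/2]` against the
kernel `log |sin μ(z - y)| - log |sin μ(z + y)|`. Dividing `sin (a - b)` and `sin (a + b)` by
`cos a cos b` turns this kernel into the logarithm of the tangent ratio, and for
`a, b ∈ (0, π/2)`, `a ≠ b`, one has `0 < |sin (a - b)| < sin (a + b)`, so the folded kernel is
negative off the diagonal and `v (z) < 0` when `ω > 0`.
-/

theorem intervalIntegrable_mul_log_abs {ω f : ℝ → ℝ} {a b : ℝ}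
    (hω : ContinuousOn ω (uIcc a b)) (hf : AnalyticOnNhd ℝ f (uIcc a b)) :
    IntervalIntegrable (fun y => ω y * log |f y|) volume a b := by
  simp only [log_abs]
  exact hf.meromorphicOn.intervalIntegrable_log.continuousOn_mul hω

theorem intervalIntegral_neg_of_neg_on_of_ne {f : ℝ → ℝ} {a b c : ℝ}
    (hfi : IntervalIntegrable f volume a b) (hc : c ∈ Ioo a b)
    (hneg : ∀ x ∈ Ioo a b, x ≠ c → f x < 0) : ∫ x in a..b, f x < 0 := by
  have hc' : c ∈ uIcc a b := Icc_subset_uIcc (Ioo_subset_Icc_self hc)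
  have hac : IntervalIntegrable (-f) volume a c :=
    hfi.neg.mono_set (uIcc_subset_uIcc left_mem_uIcc hc')
  have hcb : IntervalIntegrable (-f) volume c b :=
    hfi.neg.mono_set (uIcc_subset_uIcc hc' right_mem_uIcc)
  have hpos : 0 < ∫ x in a..b, (-f) x := by
    rw [← intervalIntegral.integral_add_adjacent_intervals hac hcb]
    refine add_pos (intervalIntegral.intervalIntegral_pos_of_pos_on hac (fun x hx => ?_) hc.1)
      (intervalIntegral.intervalIntegral_pos_of_pos_on hcb (fun x hx => ?_) hc.2)
    · exact neg_pos.mpr (hneg x ⟨hx.1, hx.2.trans hc.2⟩ hx.2.ne)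
    · exact neg_pos.mpr (hneg x ⟨hc.1.trans hx.1, hx.2⟩ hx.1.ne')
  simpa only [Pi.neg_apply, intervalIntegral.integral_neg, neg_pos] using hpos

theorem integral_mul_comp_sub_eq_integral_half {ω K : ℝ → ℝ} {L : ℝ} (z : ℝ)
    (hL : 0 ≤ L) (hK : Function.Periodic K L) (hodd : ∀ y ∈ Icc 0 L, ω (L - y) = -ω y)
    (hF : IntervalIntegrable (fun y => ω y * K (z - y)) volume 0 L) :
    ∫ y in 0..L, ω y * K (z - y) = ∫ y in 0..L / 2, ω y * (K (z - y) - K (z + y)) := by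
  set F := fun y => ω y * K (z - y)
  have hmid : L / 2 ∈ uIcc 0 L := by rw [uIcc_of_le hL]; constructor <;> linarith
  have hF₁ : IntervalIntegrable F volume 0 (L / 2) :=
    hF.mono_set (uIcc_subset_uIcc left_mem_uIcc hmid)
  have hF₂ : IntervalIntegrable F volume (L / 2) L :=
    hF.mono_set (uIcc_subset_uIcc hmid right_mem_uIcc)
  have hreflect : EqOn (fun y => F (L - y)) (fun y => -(ω y * K (z + y))) (uIcc 0 (L / 2)) := by
    intro y hy
    rw [uIcc_of_le (by linarith)] at hy
    simp only [F, hodd y ⟨hy.1, by linarith [hy.2]⟩, show z - (L - y) = z + y - L by ring,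
      hK.sub_eq, neg_mul]
  have hsecond : ∫ y in L / 2..L, F y = -∫ y in 0..L / 2, ω y * K (z + y) := by
    rw [← intervalIntegral.integral_neg, ← intervalIntegral.integral_congr hreflect,
      intervalIntegral.integral_comp_sub_left, sub_half, sub_zero]
  have hG : IntervalIntegrable (fun y => ω y * K (z + y)) volume 0 (L / 2) := by
    have := (hF₂.comp_sub_left L).neg.symm
    rw [sub_half, sub_self] at this
    refine this.congr fun y hy => ?_
    simp [hreflect (uIoc_subset_uIcc hy)]
  rw [← intervalIntegral.integral_add_adjacent_intervals hF₁ hF₂, hsecond, ← sub_eq_add_neg,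
    ← intervalIntegral.integral_sub hF₁ hG]
  simp only [F, mul_sub]

theorem sin_sub_div_sin_add {a b : ℝ} (ha : cos a ≠ 0) (hb : cos b ≠ 0) :
    sin (a - b) / sin (a + b) = (tan a - tan b) / (tan a + tan b) := by
  rw [sin_sub, sin_add, tan_eq_sin_div_cos, tan_eq_sin_div_cos]
  field_simp

theorem abs_sin_sub_lt_sin_add {a b : ℝ} (ha : a ∈ Ioo 0 (π / 2)) (hb : b ∈ Ioo 0 (π / 2)) :
    |sin (a - b)| < sin (a + b) := by
  have hsa := sin_pos_of_pos_of_lt_pi ha.1 (by linarith [ha.2, pi_pos])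
  have hsb := sin_pos_of_pos_of_lt_pi hb.1 (by linarith [hb.2, pi_pos])
  have hca := cos_pos_of_mem_Ioo ⟨by linarith [ha.1, pi_pos], ha.2⟩
  have hcb := cos_pos_of_mem_Ioo ⟨by linarith [hb.1, pi_pos], hb.2⟩
  -- `sin (a + b) ∓ sin (a - b)` equals `2 cos a sin b`, resp. `2 sin a cos b`
  rw [abs_lt, sin_sub, sin_add]
  constructor <;> nlinarith [mul_pos hsa hcb, mul_pos hca hsb]

theorem sin_sub_ne_zero {a b : ℝ} (ha : a ∈ Ioo 0 π) (hb : b ∈ Ioo 0 π) (hab : a ≠ b) :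
    sin (a - b) ≠ 0 := by
  rw [Ne, sin_eq_zero_iff_of_lt_of_lt (by linarith [ha.1, hb.2]) (by linarith [ha.2, hb.1]),
    sub_eq_zero]
  exact hab

theorem log_abs_sin_sub_sub_log_abs_sin_add {a b : ℝ} (ha : a ∈ Ioo 0 (π / 2))
    (hb : b ∈ Ioo 0 (π / 2)) (hab : a ≠ b) :
    log |sin (a - b)| - log |sin (a + b)| = log |(tan a - tan b) / (tan a + tan b)| := by
  have hsub := sin_sub_ne_zero (Ioo_subset_Ioo_right (half_le_self pi_pos.le) ha)
    (Ioo_subset_Ioo_right (half_le_self pi_pos.le) hb) hab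
  have hadd : sin (a + b) ≠ 0 := ((abs_nonneg _).trans_lt (abs_sin_sub_lt_sin_add ha hb)).ne'
  rw [← sin_sub_div_sin_add (cos_pos_of_mem_Ioo ⟨by linarith [ha.1, pi_pos], ha.2⟩).ne'
    (cos_pos_of_mem_Ioo ⟨by linarith [hb.1, pi_pos], hb.2⟩).ne', abs_div,
    log_div (abs_ne_zero.mpr hsub) (abs_ne_zero.mpr hadd)]

theorem log_abs_sin_sub_lt_log_abs_sin_add {a b : ℝ} (ha : a ∈ Ioo 0 (π / 2))
    (hb : b ∈ Ioo 0 (π / 2)) (hab : a ≠ b) : log |sin (a - b)| < log |sin (a + b)| := by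
  have hsub := sin_sub_ne_zero (Ioo_subset_Ioo_right (half_le_self pi_pos.le) ha)
    (Ioo_subset_Ioo_right (half_le_self pi_pos.le) hb) hab
  have hlt := abs_sin_sub_lt_sin_add ha hb
  exact log_lt_log (abs_pos.mpr hsub) (hlt.trans_le (le_abs_self _))

theorem periodic_log_abs_sin_pi_div_mul {L : ℝ} (hL : L ≠ 0) :
    Function.Periodic (fun x => log |sin (π / L * x)|) L := fun x => by
  simp only [mul_add, div_mul_cancel₀ π hL, sin_add_pi, abs_neg]

theorem pi_div_mul_mem_Ioo_pi_div_two {L y : ℝ} (hL : 0 < L) (hy : y ∈ Ioo 0 (L / 2)) :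
    π / L * y ∈ Ioo 0 (π / 2) := by
  refine ⟨mul_pos (div_pos pi_pos hL) hy.1, ?_⟩
  rw [div_mul_eq_mul_div, div_lt_div_iff₀ hL two_pos]
  nlinarith [pi_pos, hy.2]

theorem velocity_representation_and_negativity_general
    (L : ℝ) (hL : 0 < L) (ω : ℝ → ℝ)
    (hcont : Continuous ω)
    (hodd : ∀ y ∈ Icc (0:ℝ) L, ω (L - y) = -ω y) :
    ∀ z ∈ Ioo (0:ℝ) (L / 2),
      ((1 / π) * ∫ y in (0:ℝ)..L, ω y * Real.log |Real.sin (π / L * (z - y))|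
        = (1 / π) * ∫ y in (0:ℝ)..(L / 2),
            ω y * Real.log |(Real.tan (π / L * z) - Real.tan (π / L * y))
                / (Real.tan (π / L * z) + Real.tan (π / L * y))|) ∧
      ((∀ x ∈ Ioo (0:ℝ) (L / 2), 0 < ω x) →
        (1 / π) * (∫ y in (0:ℝ)..L, ω y * Real.log |Real.sin (π / L * (z - y))|) < 0) := by
  intro z hz
  set K : ℝ → ℝ := fun x => log |sin (π / L * x)|
  have hangle : ∀ y ∈ Ioo 0 (L / 2), π / L * y ∈ Ioo 0 (π / 2) := fun y hy =>
    pi_div_mul_mem_Ioo_pi_div_two hL hy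
  have hinj : ∀ y, y ≠ z → π / L * z ≠ π / L * y := fun y hyz h =>
    hyz (mul_left_cancel₀ (div_pos pi_pos hL).ne' h).symm
  have hF : ∀ a b, IntervalIntegrable (fun y => ω y * K (z - y)) volume a b := fun a b =>
    intervalIntegrable_mul_log_abs hcont.continuousOn (fun y _ => by fun_prop)
  have hG : ∀ a b, IntervalIntegrable (fun y => ω y * K (z + y)) volume a b := fun a b =>
    intervalIntegrable_mul_log_abs hcont.continuousOn (fun y _ => by fun_prop)
  have hfold := integral_mul_comp_sub_eq_integral_half (K := K) z hL.le
    (periodic_log_abs_sin_pi_div_mul hL.ne') hodd (hF 0 L)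
  refine ⟨?_, fun hωpos => ?_⟩
  · rw [hfold]
    congr 1
    refine intervalIntegral.integral_congr_ae ?_
    filter_upwards [(toFinite {z, L / 2}).countable.ae_notMem volume] with y hy hmem
    rw [uIoc_of_le (by linarith [hz.1, hz.2])] at hmem
    simp only [mem_insert_iff, mem_singleton_iff, not_or] at hy
    have hy' : y ∈ Ioo 0 (L / 2) := ⟨hmem.1, hmem.2.lt_of_ne hy.2⟩
    rw [← log_abs_sin_sub_sub_log_abs_sin_add (hangle z hz) (hangle y hy') (hinj y hy.1)]
    simp only [K, mul_sub, mul_add]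
  · rw [hfold]
    refine mul_neg_of_pos_of_neg (by positivity) (intervalIntegral_neg_of_neg_on_of_ne ?_ hz ?_)
    · simpa only [mul_sub] using (hF 0 (L / 2)).sub (hG 0 (L / 2))
    · intro y hy hyz
      refine mul_neg_of_pos_of_neg (hωpos y hy) (sub_neg.mpr ?_)
      simpa only [K, mul_sub, mul_add] using
        log_abs_sin_sub_lt_log_abs_sin_add (hangle z hz) (hangle y hy) (hinj y hyz)

/-- **Representation and negativity of the velocity field.**
Let `L > 0`, `μ = π/L`, and let `ω` be continuous, `L`-periodic, and odd about `z = 0`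
(`ω(L − y) = −ω(y)`).  Set `v(z) = (1/π) ∫₀^L ω(y) log|sin(μ(z−y))| dy`.  Then for every
`z ∈ (0, L/2)`:
`v(z) = (1/π) ∫₀^{L/2} ω(y) log|(tan(μz) − tan(μy))/(tan(μz) + tan(μy))| dy`, and if
moreover `ω > 0` on `(0, L/2)`, then `v(z) < 0`. -/
theorem velocity_representation_and_negativity
    (L : ℝ) (hL : 0 < L) (ω : ℝ → ℝ)
    (hcont : Continuous ω) (hper : Function.Periodic ω L)
    (hodd : ∀ y ∈ Icc (0:ℝ) L, ω (L - y) = -ω y) :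
    ∀ z ∈ Ioo (0:ℝ) (L / 2),
      ((1 / π) * ∫ y in (0:ℝ)..L, ω y * Real.log |Real.sin (π / L * (z - y))|
        = (1 / π) * ∫ y in (0:ℝ)..(L / 2),
            ω y * Real.log |(Real.tan (π / L * z) - Real.tan (π / L * y))
                / (Real.tan (π / L * z) + Real.tan (π / L * y))|) ∧
      ((∀ x ∈ Ioo (0:ℝ) (L / 2), 0 < ω x) →
        (1 / π) * (∫ y in (0:ℝ)..L, ω y * Real.log |Real.sin (π / L * (z - y))|) < 0) :=
  velocity_representation_and_negativity_general L hL ω hcont hodd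
end

section
/- ODE comparison lemma: Let c₀ > 0, let T ∈ (0, ∞], and let H : [0,T) → ℝ be twice differentiable with H(0) = 0, H'(0) ≥ c₀², and H''(t) ≥ (1/2) H(t) H'(t) for all t ∈ [0,T). Then H'(t) ≥ c₀² + H(t)²/4 for all t, and H(t) ≥ 2c₀ tan(c₀ t/2) for all t ∈ [0, min(T, π/c₀)). In particular, T ≤ π/c₀ (H blows up no later than π/c₀). -/
/-!
`G = H' - H²/4` has `G' = H'' - H H'/2 ≥ 0`, so `H' ≥ H'(0) + H²/4 ≥ c₀² + H²/4`.
This Riccati inequality makes `arctan (H / 2c₀) - c₀ t / 2` nondecreasing, whence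
`H ≥ 2c₀ tan (c₀ t / 2)`. The right-hand side is unbounded on `[0, π/c₀)`, while `H` is
continuous, hence bounded, on any compact `[0, r] ⊆ [0, T)`; so `T ≤ π/c₀`.
-/

open Set Real
open scoped ENNReal

theorem le_of_hasDerivWithinAt_Ici_nonneg {f f' : ℝ → ℝ} {a b : ℝ} (hab : a ≤ b)
    (hf : ∀ t ∈ Icc a b, HasDerivWithinAt f (f' t) (Ici a) t)
    (hf' : ∀ t ∈ Icc a b, 0 ≤ f' t) : f a ≤ f b := by
  have hcont : ContinuousOn f (Icc a b) := fun t ht =>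
    (hf t ht).continuousWithinAt.mono Icc_subset_Ici_self
  refine monotoneOn_of_hasDerivWithinAt_nonneg (convex_Icc a b) hcont (fun t ht => ?_)
    (fun t ht => hf' t (interior_subset ht)) (left_mem_Icc.2 hab) (right_mem_Icc.2 hab) hab
  rw [interior_Icc] at ht ⊢
  exact (hf t (Ioo_subset_Icc_self ht)).mono (Ioo_subset_Icc_self.trans Icc_subset_Ici_self)

section Riccati

variable {H H' H'' : ℝ → ℝ} {a b : ℝ}

theorem sub_sq_div_four_le_of_half_mul_le_deriv (hab : a ≤ b)
    (hH : ∀ t ∈ Icc a b, HasDerivWithinAt H (H' t) (Ici a) t)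
    (hH' : ∀ t ∈ Icc a b, HasDerivWithinAt H' (H'' t) (Ici a) t)
    (hineq : ∀ t ∈ Icc a b, 1 / 2 * H t * H' t ≤ H'' t) :
    H' a - H a ^ 2 / 4 ≤ H' b - H b ^ 2 / 4 := by
  refine le_of_hasDerivWithinAt_Ici_nonneg (f := fun t => H' t - H t ^ 2 / 4)
    (f' := fun t => H'' t - 2 * H t ^ 1 * H' t / 4) hab
    (fun t ht => (hH' t ht).sub (((hH t ht).pow 2).div_const 4)) fun t ht => ?_
  linarith [hineq t ht, pow_one (H t)]

theorem mul_sub_div_two_le_arctan_sub {c : ℝ} (hc : 0 < c) (hab : a ≤ b)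
    (hH : ∀ t ∈ Icc a b, HasDerivWithinAt H (H' t) (Ici a) t)
    (hriccati : ∀ t ∈ Icc a b, c ^ 2 + H t ^ 2 / 4 ≤ H' t) :
    c * (b - a) / 2 ≤ arctan (H b / (2 * c)) - arctan (H a / (2 * c)) := by
  suffices arctan (H a / (2 * c)) - c / 2 * a ≤ arctan (H b / (2 * c)) - c / 2 * b by linarith
  refine le_of_hasDerivWithinAt_Ici_nonneg (f := fun t => arctan (H t / (2 * c)) - c / 2 * t)
    (f' := fun t => 1 / (1 + (H t / (2 * c)) ^ 2) * (H' t / (2 * c)) - c / 2) hab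
    (fun t ht => ?_) fun t ht => ?_
  · exact ((hasDerivAt_arctan _).comp_hasDerivWithinAt t ((hH t ht).div_const _)).sub
      (by simpa using (hasDerivWithinAt_id t (Ici a)).const_mul (c / 2))
  · have hden : 0 < (1 + (H t / (2 * c)) ^ 2) * (2 * c) := by positivity
    have hderiv : 1 / (1 + (H t / (2 * c)) ^ 2) * (H' t / (2 * c)) - c / 2
        = (H' t - (c ^ 2 + H t ^ 2 / 4)) / ((1 + (H t / (2 * c)) ^ 2) * (2 * c)) := by
      field_simp
      ring
    rw [hderiv]
    exact div_nonneg (by linarith [hriccati t ht]) hden.le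

end Riccati

theorem tan_le_of_le_arctan {x y : ℝ} (hx : -(π / 2) < x) (h : x ≤ arctan y) : tan x ≤ y :=
  tan_arctan y ▸ strictMonoOn_tan.monotoneOn ⟨hx, h.trans_lt (arctan_lt_pi_div_two y)⟩
    (arctan_mem_Ioo y) h

theorem exists_lt_two_mul_tan {c : ℝ} (hc : 0 < c) (M : ℝ) :
    ∃ t, 0 ≤ t ∧ c * t < π ∧ M < 2 * c * tan (c * t / 2) := by
  set s := arctan (|M| / (2 * c) + 1)
  refine ⟨2 * s / c, by positivity [arctan_nonneg.2 (by positivity : 0 ≤ |M| / (2 * c) + 1)],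
    ?_, ?_⟩
  · rw [mul_div_cancel₀ _ hc.ne']
    linarith [arctan_lt_pi_div_two (|M| / (2 * c) + 1)]
  · rw [mul_div_cancel₀ _ hc.ne', mul_div_cancel_left₀ _ two_ne_zero, tan_arctan,
      mul_add, mul_div_cancel₀ _ (by positivity)]
    linarith [le_abs_self M]

theorem ode_comparison_lemma_general
    (c₀ : ℝ) (hc : 0 < c₀) (T : ℝ≥0∞)
    (H H' H'' : ℝ → ℝ)
    (hH0 : H 0 = 0) (hH'0 : c₀ ^ 2 ≤ H' 0)
    (hd1 : ∀ t : ℝ, 0 ≤ t → ENNReal.ofReal t < T →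
      HasDerivWithinAt H (H' t) (Ici 0) t)
    (hd2 : ∀ t : ℝ, 0 ≤ t → ENNReal.ofReal t < T →
      HasDerivWithinAt H' (H'' t) (Ici 0) t)
    (hineq : ∀ t : ℝ, 0 ≤ t → ENNReal.ofReal t < T →
      (1 / 2) * H t * H' t ≤ H'' t) :
    (∀ t : ℝ, 0 ≤ t → ENNReal.ofReal t < T → c₀ ^ 2 + (H t) ^ 2 / 4 ≤ H' t) ∧
    (∀ t : ℝ, 0 ≤ t → ENNReal.ofReal t < T → c₀ * t < π →
      2 * c₀ * Real.tan (c₀ * t / 2) ≤ H t) ∧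
    T ≤ ENNReal.ofReal (π / c₀) := by
  have below {t s : ℝ} (htT : ENNReal.ofReal t < T) (hs : s ∈ Icc 0 t) : ENNReal.ofReal s < T :=
    (ENNReal.ofReal_le_ofReal hs.2).trans_lt htT
  have hriccati (t : ℝ) (ht : 0 ≤ t) (htT : ENNReal.ofReal t < T) :
      c₀ ^ 2 + H t ^ 2 / 4 ≤ H' t := by
    have := sub_sq_div_four_le_of_half_mul_le_deriv ht (fun s hs => hd1 s hs.1 (below htT hs))
      (fun s hs => hd2 s hs.1 (below htT hs)) fun s hs => hineq s hs.1 (below htT hs)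
    rw [hH0] at this
    linarith
  have htan (t : ℝ) (ht : 0 ≤ t) (htT : ENNReal.ofReal t < T) (htπ : c₀ * t < π) :
      2 * c₀ * tan (c₀ * t / 2) ≤ H t := by
    have := mul_sub_div_two_le_arctan_sub hc ht (fun s hs => hd1 s hs.1 (below htT hs))
      fun s hs => hriccati s hs.1 (below htT hs)
    rw [hH0, zero_div, arctan_zero, sub_zero, sub_zero] at this
    have := tan_le_of_le_arctan (by nlinarith [pi_pos]) this
    rwa [le_div_iff₀' (by positivity)] at this
  refine ⟨hriccati, htan, ?_⟩
  by_contra! hTπ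
  obtain ⟨r, -, hπr, hrT⟩ := ENNReal.lt_iff_exists_real_btwn.1 hTπ
  have hπr : π / c₀ < r := (ENNReal.ofReal_lt_ofReal_iff_of_nonneg (by positivity)).1 hπr
  have hcont : ContinuousOn H (Icc 0 r) := fun s hs =>
    (hd1 s hs.1 (below hrT hs)).continuousWithinAt.mono Icc_subset_Ici_self
  obtain ⟨M, hM⟩ := isCompact_Icc.bddAbove_image hcont
  obtain ⟨t, ht, htπ, hMt⟩ := exists_lt_two_mul_tan hc M
  have htr : t ≤ r := ((lt_div_iff₀' hc).2 htπ).le.trans hπr.le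
  have hHt : H t ≤ M := hM ⟨t, ⟨ht, htr⟩, rfl⟩
  linarith [htan t ht (below hrT ⟨ht, htr⟩) htπ]

/-- **ODE comparison lemma.**
Let `c₀ > 0`, `T ∈ (0, ∞]`, and let `H : [0,T) → ℝ` be twice differentiable with
`H(0) = 0`, `H'(0) ≥ c₀²` and `H'' ≥ (1/2) H H'` on `[0,T)`.  Then
`H' ≥ c₀² + H²/4` on `[0,T)`, `H(t) ≥ 2c₀ tan(c₀ t/2)` for `t ∈ [0, min(T, π/c₀))`, and
consequently `T ≤ π/c₀` (`H` blows up no later than `π/c₀`). -/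
theorem ode_comparison_lemma
    (c₀ : ℝ) (hc : 0 < c₀) (T : ℝ≥0∞) (hT : 0 < T)
    (H H' H'' : ℝ → ℝ)
    (hH0 : H 0 = 0) (hH'0 : c₀ ^ 2 ≤ H' 0)
    (hd1 : ∀ t : ℝ, 0 ≤ t → ENNReal.ofReal t < T →
      HasDerivWithinAt H (H' t) (Ici 0) t)
    (hd2 : ∀ t : ℝ, 0 ≤ t → ENNReal.ofReal t < T →
      HasDerivWithinAt H' (H'' t) (Ici 0) t)
    (hineq : ∀ t : ℝ, 0 ≤ t → ENNReal.ofReal t < T →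
      (1 / 2) * H t * H' t ≤ H'' t) :
    (∀ t : ℝ, 0 ≤ t → ENNReal.ofReal t < T → c₀ ^ 2 + (H t) ^ 2 / 4 ≤ H' t) ∧
    (∀ t : ℝ, 0 ≤ t → ENNReal.ofReal t < T → c₀ * t < π →
      2 * c₀ * Real.tan (c₀ * t / 2) ≤ H t) ∧
    T ≤ ENNReal.ofReal (π / c₀) :=
  ode_comparison_lemma_general c₀ hc T H H' H'' hH0 hH'0 hd1 hd2 hineq
end

section
/- Blowup from a system of differential inequalities: Let c₀ > 0, T ∈ (0, ∞], and let h₁, h₂ : [0,T) → ℝ be differentiable functions with h₁(0) = 0, h₂(0) ≥ c₀², h₂(t) ≥ 0 for all t, h₁'(t) ≥ h₂(t), and h₂'(t) ≥ (1/2) h₁(t) h₂(t) for all t ∈ [0,T). Then h₁(t) ≥ 2c₀ tan(c₀ t/2) for all t ∈ [0, min(T, π/c₀)); in particular T ≤ π/c₀, i.e., h₁ becomes unbounded no later than π/c₀. -/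
/-!
For `c > 0` the functions `g = 2c tan(ct/2)` and `k = c² sec²(ct/2)` solve `g' = k`,
`k' = g k / 2` with `g 0 = 0`, `k 0 = c²`. For `c < c₀` a first-contact argument keeps `(h₁, h₂)`
above `(g, k)`: while `h₂ > k`, integrating `h₁' ≥ h₂ > k = g'` gives `h₁ ≥ g`, hence
`h₂' ≥ h₁ h₂ / 2 ≥ g k / 2 = k'`, so `h₂ - k` never drops below `h₂ 0 - c² > 0`. Letting `c → c₀`
gives `h₁ ≥ 2c₀ tan(c₀t/2)`. If `T > π/c₀`, then `h₁` would be bounded on `[0, π/c₀]`, while this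
lower bound tends to `∞` at `π/c₀`.
-/

open Set Real Filter Topology
open scoped ENNReal

theorem sub_le_sub_of_hasDerivWithinAt_le {f g f' g' : ℝ → ℝ} {a b : ℝ}
    (hf : ∀ x ∈ Icc a b, HasDerivWithinAt f (f' x) (Icc a b) x)
    (hg : ∀ x ∈ Icc a b, HasDerivWithinAt g (g' x) (Icc a b) x)
    (hle : ∀ x ∈ Ico a b, f' x ≤ g' x) :
    ∀ x ∈ Icc a b, f x - f a ≤ g x - g a := by
  have right_deriv {u u' : ℝ → ℝ} (hu : ∀ x ∈ Icc a b, HasDerivWithinAt u (u' x) (Icc a b) x)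
      (x : ℝ) (hx : x ∈ Ico a b) : HasDerivWithinAt u (u' x) (Ici x) x :=
    (hu x (Ico_subset_Icc_self hx)).mono_of_mem_nhdsWithin (Icc_mem_nhdsGE_of_mem hx)
  intro x hx
  have := image_le_of_deriv_right_le_deriv_boundary (B := fun x => g x - g a + f a)
    (fun x hx => (hf x hx).continuousWithinAt) (right_deriv hf) (by simp)
    (fun x hx => ((hg x hx).continuousWithinAt.sub continuousWithinAt_const).add
      continuousWithinAt_const)
    (fun x hx => ((right_deriv hg x hx).sub_const _).add_const _) hle hx
  linarith

theorem ContinuousOn.exists_first_nonpos {φ : ℝ → ℝ} {a b : ℝ} (hab : a ≤ b)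
    (hφ : ContinuousOn φ (Icc a b)) (ha : 0 < φ a) (hb : φ b ≤ 0) :
    ∃ t ∈ Ioc a b, φ t ≤ 0 ∧ ∀ s ∈ Ico a t, 0 < φ s := by
  set S := Icc a b ∩ φ ⁻¹' Iic 0
  have hbdd : BddBelow S := ⟨a, fun x hx => hx.1.1⟩
  have hmem : sInf S ∈ S :=
    (hφ.preimage_isClosed_of_isClosed isClosed_Icc isClosed_Iic).csInf_mem
      ⟨b, ⟨hab, le_rfl⟩, hb⟩ hbdd
  refine ⟨sInf S, ⟨hmem.1.1.lt_of_ne ?_, hmem.1.2⟩, hmem.2, fun s hs => ?_⟩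
  · intro hat
    exact (not_le.2 ha) (hat ▸ hmem.2)
  · by_contra! hs'
    exact (csInf_le hbdd ⟨⟨hs.1, hs.2.le.trans hmem.1.2⟩, hs'⟩).not_gt hs.2

noncomputable def model₁ (c t : ℝ) : ℝ := 2 * c * tan (c * t / 2)

noncomputable def model₂ (c t : ℝ) : ℝ := c ^ 2 / cos (c * t / 2) ^ 2

section Model

variable {c t b : ℝ}

@[simp] theorem model₁_zero : model₁ c 0 = 0 := by simp [model₁]

@[simp] theorem model₂_zero : model₂ c 0 = c ^ 2 := by simp [model₂]

theorem model₂_nonneg : 0 ≤ model₂ c t := by unfold model₂; positivity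

theorem mul_mem_Ico_zero_pi (hc : 0 ≤ c) (hb : c * b < π) (ht : t ∈ Icc 0 b) :
    c * t ∈ Ico 0 π :=
  ⟨mul_nonneg hc ht.1, (mul_le_mul_of_nonneg_left ht.2 hc).trans_lt hb⟩

theorem cos_half_pos (h : c * t ∈ Ico 0 π) : 0 < cos (c * t / 2) :=
  cos_pos_of_mem_Ioo ⟨by linarith [h.1, pi_pos], by linarith [h.2]⟩

theorem model₁_nonneg (hc : 0 ≤ c) (h : c * t ∈ Ico 0 π) : 0 ≤ model₁ c t :=
  mul_nonneg (by positivity) (tan_nonneg_of_nonneg_of_le_pi_div_two (by linarith [h.1])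
    (by linarith [h.2]))

theorem hasDerivAt_half_mul (c t : ℝ) : HasDerivAt (fun s => c * s / 2) (c / 2) t := by
  simpa using ((hasDerivAt_id t).const_mul c).div_const 2

theorem hasDerivAt_model₁ (h : cos (c * t / 2) ≠ 0) :
    HasDerivAt (model₁ c) (model₂ c t) t := by
  refine (((hasDerivAt_tan h).comp t (hasDerivAt_half_mul c t)).const_mul (2 * c)).congr_deriv ?_
  simp only [model₂]
  field_simp

theorem hasDerivAt_model₂ (h : cos (c * t / 2) ≠ 0) :
    HasDerivAt (model₂ c) (1 / 2 * model₁ c t * model₂ c t) t := by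
  refine ((hasDerivAt_const t (c ^ 2)).div
    (((hasDerivAt_cos _).comp t (hasDerivAt_half_mul c t)).pow 2) (pow_ne_zero 2 h)).congr_deriv ?_
  simp only [model₁, model₂, tan_eq_sin_div_cos, Function.comp_apply, Pi.pow_apply]
  field_simp
  ring

theorem hasDerivWithinAt_model₁_Icc (hc : 0 ≤ c) (hb : c * b < π) :
    ∀ t ∈ Icc 0 b, HasDerivWithinAt (model₁ c) (model₂ c t) (Icc 0 b) t := fun _ ht =>
  (hasDerivAt_model₁ (cos_half_pos (mul_mem_Ico_zero_pi hc hb ht)).ne').hasDerivWithinAt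

theorem hasDerivWithinAt_model₂_Icc (hc : 0 ≤ c) (hb : c * b < π) :
    ∀ t ∈ Icc 0 b, HasDerivWithinAt (model₂ c) (1 / 2 * model₁ c t * model₂ c t) (Icc 0 b) t :=
  fun _ ht =>
  (hasDerivAt_model₂ (cos_half_pos (mul_mem_Ico_zero_pi hc hb ht)).ne').hasDerivWithinAt

theorem continuousAt_model₁_param (h : cos (c * t / 2) ≠ 0) :
    ContinuousAt (fun c => model₁ c t) c :=
  (continuousAt_const.mul continuousAt_id).mul <|
    (continuousAt_tan.2 h).comp (f := fun c => c * t / 2) (by fun_prop)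

theorem tendsto_model₁_atTop (hc : 0 < c) : Tendsto (model₁ c) (𝓝[<] (π / c)) atTop := by
  have hhalf : Tendsto (fun s => c * s / 2) (𝓝[<] (π / c)) (𝓝[<] (π / 2)) := by
    refine tendsto_nhdsWithin_of_tendsto_nhds_of_eventually_within _ ?_ ?_
    · have hπ : c * (π / c) / 2 = π / 2 := by field_simp
      exact hπ ▸ ((continuous_const.mul continuous_id).div_const 2).continuousAt.tendsto
        |>.mono_left nhdsWithin_le_nhds
    · filter_upwards [self_mem_nhdsWithin] with s hs
      have hcs : c * s < π := (lt_div_iff₀' hc).1 hs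
      exact show c * s / 2 < π / 2 by linarith
  exact (tendsto_tan_pi_div_two.comp hhalf).const_mul_atTop (by positivity)

theorem not_continuousOn_of_model₁_le {f : ℝ → ℝ} (hc : 0 < c)
    (hf : ∀ t ∈ Ico 0 (π / c), model₁ c t ≤ f t) : ¬ ContinuousOn f (Icc 0 (π / c)) := by
  intro hcont
  obtain ⟨M, hM⟩ := isCompact_Icc.bddAbove_image hcont
  have hle : ∀ᶠ t in 𝓝[<] (π / c), model₁ c t ≤ M := by
    filter_upwards [Ioo_mem_nhdsLT (by positivity : 0 < π / c)] with t ht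
    exact (hf t ⟨ht.1.le, ht.2⟩).trans (hM ⟨t, ⟨ht.1.le, ht.2.le⟩, rfl⟩)
  obtain ⟨t, hle, hgt⟩ := (hle.and ((tendsto_model₁_atTop hc).eventually_gt_atTop M)).exists
  exact hgt.not_ge hle

end Model

section Comparison

variable {h₁ h₂ d₁ d₂ : ℝ → ℝ} {c b : ℝ}

theorem model₁_le_of_model₂_le (hc : 0 ≤ c) (hb : c * b < π)
    (hd₁ : ∀ t ∈ Icc 0 b, HasDerivWithinAt h₁ (d₁ t) (Icc 0 b) t)
    (hi₁ : ∀ t ∈ Ico 0 b, h₂ t ≤ d₁ t) (h₁0 : 0 ≤ h₁ 0)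
    (h₂ge : ∀ t ∈ Ico 0 b, model₂ c t ≤ h₂ t) :
    ∀ t ∈ Icc 0 b, model₁ c t ≤ h₁ t := by
  intro t ht
  have := sub_le_sub_of_hasDerivWithinAt_le (hasDerivWithinAt_model₁_Icc hc hb) hd₁
    (fun s hs => (h₂ge s hs).trans (hi₁ s hs)) t ht
  rw [model₁_zero] at this
  linarith

theorem model₂_lt_of_supersolution (hc : 0 ≤ c) (hb : c * b < π)
    (hd₁ : ∀ t ∈ Icc 0 b, HasDerivWithinAt h₁ (d₁ t) (Icc 0 b) t)
    (hd₂ : ∀ t ∈ Icc 0 b, HasDerivWithinAt h₂ (d₂ t) (Icc 0 b) t)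
    (hi₁ : ∀ t ∈ Icc 0 b, h₂ t ≤ d₁ t) (hi₂ : ∀ t ∈ Icc 0 b, 1 / 2 * h₁ t * h₂ t ≤ d₂ t)
    (h₁0 : 0 ≤ h₁ 0) (h₂0 : c ^ 2 < h₂ 0) :
    ∀ t ∈ Icc 0 b, model₂ c t < h₂ t := by
  intro t ht
  by_contra! hle
  have hcont : ContinuousOn (fun s => h₂ s - model₂ c s) (Icc 0 t) :=
    (ContinuousOn.sub (fun s hs => (hd₂ s hs).continuousWithinAt)
      fun s hs => (hasDerivWithinAt_model₂_Icc hc hb s hs).continuousWithinAt).mono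
        (Icc_subset_Icc_right ht.2)
  obtain ⟨t₀, ht₀, hcross, hpos⟩ := hcont.exists_first_nonpos ht.1
    (by simpa using h₂0) (by simpa using hle)
  have hsub : Icc 0 t₀ ⊆ Icc 0 b := Icc_subset_Icc_right (ht₀.2.trans ht.2)
  have hb₀ : c * t₀ < π := (mul_mem_Ico_zero_pi hc hb (hsub (right_mem_Icc.2 ht₀.1.le))).2
  have h₁ge := model₁_le_of_model₂_le hc hb₀ (fun s hs => (hd₁ s (hsub hs)).mono hsub)
    (fun s hs => hi₁ s (hsub (Ico_subset_Icc_self hs))) h₁0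
    (fun s hs => by linarith [hpos s hs])
  have hmul : ∀ s ∈ Ico 0 t₀, 1 / 2 * model₁ c s * model₂ c s ≤ d₂ s := fun s hs => by
    have hs' := Ico_subset_Icc_self hs
    have := mul_le_mul (h₁ge s hs') (show model₂ c s ≤ h₂ s by linarith [hpos s hs])
      model₂_nonneg ((model₁_nonneg hc (mul_mem_Ico_zero_pi hc hb₀ hs')).trans (h₁ge s hs'))
    linarith [hi₂ s (hsub hs')]
  have := sub_le_sub_of_hasDerivWithinAt_le (hasDerivWithinAt_model₂_Icc hc hb₀)
    (fun s hs => (hd₂ s (hsub hs)).mono hsub) hmul t₀ (right_mem_Icc.2 ht₀.1.le)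
  rw [model₂_zero] at this
  linarith

theorem model₁_le_of_supersolution (hc : 0 < c) (hb : c * b < π)
    (hd₁ : ∀ t ∈ Icc 0 b, HasDerivWithinAt h₁ (d₁ t) (Icc 0 b) t)
    (hd₂ : ∀ t ∈ Icc 0 b, HasDerivWithinAt h₂ (d₂ t) (Icc 0 b) t)
    (hi₁ : ∀ t ∈ Icc 0 b, h₂ t ≤ d₁ t) (hi₂ : ∀ t ∈ Icc 0 b, 1 / 2 * h₁ t * h₂ t ≤ d₂ t)
    (h₁0 : 0 ≤ h₁ 0) (h₂0 : c ^ 2 ≤ h₂ 0) :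
    ∀ t ∈ Icc 0 b, model₁ c t ≤ h₁ t := by
  intro t ht
  have hb0 : 0 ≤ b := ht.1.trans ht.2
  have hbelow : ∀ᶠ c' in 𝓝[<] c, model₁ c' t ≤ h₁ t := by
    filter_upwards [Ioo_mem_nhdsLT hc] with c' hc'
    have hb' : c' * b < π := (mul_le_mul_of_nonneg_right hc'.2.le hb0).trans_lt hb
    have h₂0' : c' ^ 2 < h₂ 0 := (pow_lt_pow_left₀ hc'.2 hc'.1.le two_ne_zero).trans_le h₂0
    refine model₁_le_of_model₂_le hc'.1.le hb' hd₁ (fun s hs => hi₁ s (Ico_subset_Icc_self hs))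
      h₁0 (fun s hs => ?_) t ht
    exact (model₂_lt_of_supersolution hc'.1.le hb' hd₁ hd₂ hi₁ hi₂ h₁0 h₂0' s
      (Ico_subset_Icc_self hs)).le
  have hcos := (cos_half_pos (mul_mem_Ico_zero_pi hc.le hb ht)).ne'
  exact le_of_tendsto ((continuousAt_model₁_param hcos).tendsto.mono_left nhdsWithin_le_nhds)
    hbelow

end Comparison

theorem blowup_from_differential_inequalities_general
    (c₀ : ℝ) (hc : 0 < c₀) (T : ℝ≥0∞)
    (h₁ h₂ d₁ d₂ : ℝ → ℝ)
    (h10 : h₁ 0 = 0) (h20 : c₀ ^ 2 ≤ h₂ 0)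
    (hd1 : ∀ t : ℝ, 0 ≤ t → ENNReal.ofReal t < T →
      HasDerivWithinAt h₁ (d₁ t) (Ici 0) t)
    (hd2 : ∀ t : ℝ, 0 ≤ t → ENNReal.ofReal t < T →
      HasDerivWithinAt h₂ (d₂ t) (Ici 0) t)
    (hi1 : ∀ t : ℝ, 0 ≤ t → ENNReal.ofReal t < T → h₂ t ≤ d₁ t)
    (hi2 : ∀ t : ℝ, 0 ≤ t → ENNReal.ofReal t < T →
      (1 / 2) * h₁ t * h₂ t ≤ d₂ t) :
    (∀ t : ℝ, 0 ≤ t → ENNReal.ofReal t < T → c₀ * t < π →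
      2 * c₀ * Real.tan (c₀ * t / 2) ≤ h₁ t) ∧
    T ≤ ENNReal.ofReal (π / c₀) := by
  have hIcc {b : ℝ} (hb : ENNReal.ofReal b < T) (s : ℝ) (hs : s ∈ Icc 0 b) :
      ENNReal.ofReal s < T :=
    (ENNReal.ofReal_le_ofReal hs.2).trans_lt hb
  have lower (t : ℝ) (ht : 0 ≤ t) (htT : ENNReal.ofReal t < T) (htπ : c₀ * t < π) :
      model₁ c₀ t ≤ h₁ t :=
    model₁_le_of_supersolution hc htπ
      (fun s hs => (hd1 s hs.1 (hIcc htT s hs)).mono Icc_subset_Ici_self)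
      (fun s hs => (hd2 s hs.1 (hIcc htT s hs)).mono Icc_subset_Ici_self)
      (fun s hs => hi1 s hs.1 (hIcc htT s hs)) (fun s hs => hi2 s hs.1 (hIcc htT s hs))
      h10.ge h20 t ⟨ht, le_rfl⟩
  refine ⟨lower, not_lt.1 fun hT => not_continuousOn_of_model₁_le hc
    (fun t ht => lower t ht.1 ((ENNReal.ofReal_le_ofReal ht.2.le).trans_lt hT)
      ((lt_div_iff₀' hc).1 ht.2)) fun s hs => ?_⟩
  exact (hd1 s hs.1 (hIcc hT s hs)).continuousWithinAt.mono Icc_subset_Ici_self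

/-- **Blowup from a system of differential inequalities.**
Let `c₀ > 0`, `T ∈ (0, ∞]`, and let `h₁, h₂ : [0,T) → ℝ` be differentiable with
`h₁(0) = 0`, `h₂(0) ≥ c₀²`, `h₂ ≥ 0`, `h₁' ≥ h₂` and `h₂' ≥ (1/2) h₁ h₂` on `[0,T)`.
Then `h₁(t) ≥ 2c₀ tan(c₀ t/2)` for all `t ∈ [0, min(T, π/c₀))`; in particular
`T ≤ π/c₀`, i.e. `h₁` becomes unbounded no later than `π/c₀`. -/
theorem blowup_from_differential_inequalities
    (c₀ : ℝ) (hc : 0 < c₀) (T : ℝ≥0∞) (hT : 0 < T)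
    (h₁ h₂ d₁ d₂ : ℝ → ℝ)
    (h10 : h₁ 0 = 0) (h20 : c₀ ^ 2 ≤ h₂ 0)
    (h2nonneg : ∀ t : ℝ, 0 ≤ t → ENNReal.ofReal t < T → 0 ≤ h₂ t)
    (hd1 : ∀ t : ℝ, 0 ≤ t → ENNReal.ofReal t < T →
      HasDerivWithinAt h₁ (d₁ t) (Ici 0) t)
    (hd2 : ∀ t : ℝ, 0 ≤ t → ENNReal.ofReal t < T →
      HasDerivWithinAt h₂ (d₂ t) (Ici 0) t)
    (hi1 : ∀ t : ℝ, 0 ≤ t → ENNReal.ofReal t < T → h₂ t ≤ d₁ t)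
    (hi2 : ∀ t : ℝ, 0 ≤ t → ENNReal.ofReal t < T →
      (1 / 2) * h₁ t * h₂ t ≤ d₂ t) :
    (∀ t : ℝ, 0 ≤ t → ENNReal.ofReal t < T → c₀ * t < π →
      2 * c₀ * Real.tan (c₀ * t / 2) ≤ h₁ t) ∧
    T ≤ ENNReal.ofReal (π / c₀) :=
  blowup_from_differential_inequalities_general c₀ hc T h₁ h₂ d₁ d₂ h10 h20 hd1 hd2 hi1 hi2
end
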